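/- Let m, n ∈ ℕ with n ≥ 1. For each ā ∈ Aₘⁿ let h_ā : Sₙ ∪ S₀ → S₀ be the map with h_ā(w) = w(ā) for w ∈ Sₙ and h_ā(w) = w for w ∈ S₀ (each h_ā is a semigroup homomorphism equal to the identity on S₀). If D ⊆ S₀ is piecewise syndetic in the semigroup S₀, then ⋂_{ā∈Aₘⁿ} h_ā⁻¹[D] is piecewise syndetic in the semigroup Sₙ ∪ S₀; consequently Sₙ ∩ ⋂_{ā∈Aₘⁿ} h_ā⁻¹[D] is piecewise syndetic in Sₙ ∪ S₀. -/

import Mathlib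

set_option linter.unusedSectionVars false
set_option maxHeartbeats 1000000


open scoped BigOperators

attribute [local instance] Ultrafilter.mul Ultrafilter.semigroup

namespace InfHJ

variable {α : Type*}

/-- The union alphabet `A = ⋃ᵢ Aᵢ`. -/
def bigA (𝒜 : ℕ → Set α) : Set α := ⋃ i, 𝒜 i

/-- `S₀`: the set of nonempty finite words all of whose letters come from `A`
(viewed inside the free monoid on `α ⊕ Fin n`, letters `Sum.inl a`, variables `Sum.inr i`). -/
def S0 (𝒜 : ℕ → Set α) (n : ℕ) : Set (FreeMonoid (α ⊕ Fin n)) :=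
  {w | FreeMonoid.toList w ≠ [] ∧
    ∀ x ∈ FreeMonoid.toList w, ∃ a ∈ bigA 𝒜, x = Sum.inl a}

/-- `Sₙ`: the set of `n`-variable words over `A`: every letter is in `A` and
every variable `vᵢ` (`i : Fin n`) occurs at least once. -/
def SV (𝒜 : ℕ → Set α) (n : ℕ) : Set (FreeMonoid (α ⊕ Fin n)) :=
  {w | (∀ x ∈ FreeMonoid.toList w, ∀ a : α, x = Sum.inl a → a ∈ bigA 𝒜) ∧
    ∀ i : Fin n, Sum.inr i ∈ FreeMonoid.toList w}

/-- Substitution `w(x⃗)`: replace every occurrence of the variable `vᵢ` by the letter `xᵢ`. -/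
def subst {n : ℕ} (w : FreeMonoid (α ⊕ Fin n)) (x : Fin n → α) :
    FreeMonoid (α ⊕ Fin n) :=
  FreeMonoid.map (Sum.elim Sum.inl fun i => Sum.inl (x i)) w

/-- The tuples `ā ∈ Aₘⁿ`. -/
def tuples (𝒜 : ℕ → Set α) (m n : ℕ) : Set (Fin n → α) := {a | ∀ j, a j ∈ 𝒜 m}

/-- `D` is a J-set in the (sub)semigroup `S` of the monoid `M`: for every finite set `F` of
sequences in `S` there are `m ≥ 1`, `a₁,…,a_{m+1} ∈ S` and `t₁ < … < t_m` such that
`a₁ f(t₁) a₂ f(t₂) ⋯ a_m f(t_m) a_{m+1} ∈ D` for every `f ∈ F`. -/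
def IsJSetIn {M : Type*} [Monoid M] (S D : Set M) : Prop :=
  ∀ F : Finset (ℕ → M), (∀ f ∈ F, ∀ t, f t ∈ S) →
    ∃ m : ℕ, 1 ≤ m ∧ ∃ a : Fin (m + 1) → M, (∀ i, a i ∈ S) ∧
      ∃ t : Fin m → ℕ, StrictMono t ∧ ∀ f ∈ F,
        (List.ofFn fun i : Fin m => a i.castSucc * f (t i)).prod * a (Fin.last m) ∈ D

/-- `D` is piecewise syndetic in the (sub)semigroup `S` of the monoid `M`: there is a finite
`F ⊆ S` such that for every finite `E ⊆ S` there is `x ∈ S` with `E·x ⊆ ⋃_{t ∈ F} t⁻¹D`. -/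
def IsPWSIn {M : Type*} [Monoid M] (S D : Set M) : Prop :=
  ∃ F : Finset M, ↑F ⊆ S ∧
    ∀ E : Finset M, ↑E ⊆ S → ∃ x ∈ S, ∀ e ∈ E, ∃ t ∈ F, t * (e * x) ∈ D

/-- A (two-sided) ideal of the subsemigroup `B`. -/
def IsIdealIn {T : Type*} [Mul T] (B I : Set T) : Prop :=
  I.Nonempty ∧ I ⊆ B ∧ ∀ x ∈ I, ∀ t ∈ B, t * x ∈ I ∧ x * t ∈ I

/-- `K` is the smallest (two-sided) ideal of the subsemigroup `B`. -/
def IsSmallestIdealIn {T : Type*} [Mul T] (B K : Set T) : Prop :=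
  IsIdealIn B K ∧ ∀ I, IsIdealIn B I → K ⊆ I

/-- `D` is central in the (sub)semigroup `S` of the semigroup `M`: `D` belongs to some
idempotent ultrafilter lying in the smallest two-sided ideal of
`βS = {q : Ultrafilter M | S ∈ q}`. -/
def IsCentralIn {M : Type*} [Semigroup M] (S D : Set M) : Prop :=
  ∃ p : Ultrafilter M, S ∈ p ∧ p * p = p ∧
    (∃ K : Set (Ultrafilter M), IsSmallestIdealIn {q : Ultrafilter M | S ∈ q} K ∧ p ∈ K) ∧
    D ∈ p

/-- `D` is a C-set in the (sub)semigroup `S` of the monoid `M`: `D` belongs to some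
idempotent ultrafilter on `S` all of whose members are J-sets in `S`. -/
def IsCSetIn {M : Type*} [Monoid M] (S D : Set M) : Prop :=
  ∃ p : Ultrafilter M, S ∈ p ∧ p * p = p ∧
    (∀ B ∈ p, IsJSetIn S (B ∩ S)) ∧ D ∈ p

/-- `FS(⟨xₙ⟩)` in a commutative additive monoid: all finite sums over nonempty finite index sets. -/
def FSset {T : Type*} [AddCommMonoid T] (x : ℕ → T) : Set T :=
  {s | ∃ H : Finset ℕ, H.Nonempty ∧ s = ∑ n ∈ H, x n}

/-- `FP(⟨y_t⟩)` in a (not necessarily commutative) monoid: all products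
`y_{t₁} ⋯ y_{t_l}` with `t₁ < … < t_l`, taken in increasing order of indices. -/
def FPset {T : Type*} [Monoid T] (y : ℕ → T) : Set T :=
  {u | ∃ G : Finset ℕ, G.Nonempty ∧ u = ((G.sort (· ≤ ·)).map y).prod}

/-- `C` is an IP set in the commutative monoid `T`. -/
def IsIPSet {T : Type*} [AddCommMonoid T] (C : Set T) : Prop :=
  ∃ x : ℕ → T, FSset x ⊆ C

/-- `τ(w) = |w|_{v}`: the number of occurrences of variables in `w`
(for one-variable words this is the number of occurrences of `v₁`). -/
def tauCount {n : ℕ} (w : FreeMonoid (α ⊕ Fin n)) : ℕ :=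
  (FreeMonoid.toList w).countP Sum.isRight

/-- `T`: the words over `{v₁,…,v_k}` in which every `vᵢ` occurs. -/
def Tfull (k : ℕ) : Set (FreeMonoid (Fin k)) :=
  {u | FreeMonoid.toList u ≠ [] ∧ ∀ i : Fin k, i ∈ FreeMonoid.toList u}

/-- `τ(w)`: delete from `w` all letters of `A` and all variables `vᵢ` with `i ≥ k`,
leaving a word over `{v₁,…,v_k}`. -/
def tauDel {n : ℕ} (k : ℕ) (w : FreeMonoid (α ⊕ Fin n)) : FreeMonoid (Fin k) :=
  FreeMonoid.ofList <| (FreeMonoid.toList w).filterMap fun x =>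
    match x with
    | Sum.inl _ => none
    | Sum.inr i => if h : (i : ℕ) < k then some ⟨i, h⟩ else none

section Machinery

variable {M : Type*} [Semigroup M]

lemma mem_umul {U V : Ultrafilter M} {s : Set M} :
    s ∈ U * V ↔ {m | {m' | m * m' ∈ s} ∈ V} ∈ U := by
  have h := Ultrafilter.eventually_mul U V (· ∈ s)
  simpa only [Filter.eventually_iff, Ultrafilter.mem_coe, Set.setOf_mem_eq] using h

lemma mem_pure_umul {x : M} {V : Ultrafilter M} {s : Set M} :
    s ∈ (pure x : Ultrafilter M) * V ↔ {m' | x * m' ∈ s} ∈ V := by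
  rw [mem_umul]
  simp

lemma pure_umul_eq_map (x : M) (V : Ultrafilter M) :
    (pure x : Ultrafilter M) * V = Ultrafilter.map (fun y => x * y) V := by
  ext s
  rw [mem_pure_umul, Ultrafilter.mem_map]
  rfl

lemma continuous_umap {N : Type*} (f : M → N) :
    Continuous (Ultrafilter.map f : Ultrafilter M → Ultrafilter N) :=
  ultrafilterBasis_is_basis.continuous_iff.2 <| Set.forall_mem_range.mpr fun s => by
    have : (Ultrafilter.map f) ⁻¹' {u : Ultrafilter N | s ∈ u}
        = {u : Ultrafilter M | f ⁻¹' s ∈ u} := by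
      ext u; exact Ultrafilter.mem_map
    rw [this]; exact ultrafilter_isOpen_basic _

lemma mem_closure_ultra {A : Set (Ultrafilter M)} {q : Ultrafilter M} :
    q ∈ closure A ↔ ∀ Z ∈ q, ∃ g ∈ A, Z ∈ g := by
  constructor
  · intro hq Z hZ
    rcases mem_closure_iff.mp hq _ (ultrafilter_isOpen_basic Z) hZ with ⟨g, hg1, hg2⟩
    exact ⟨g, hg2, hg1⟩
  · intro h
    rw [mem_closure_iff_nhds]
    intro t ht
    rcases ultrafilterBasis_is_basis.mem_nhds_iff.mp ht with ⟨b, hbB, hqb, hbt⟩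
    rcases hbB with ⟨Z, rfl⟩
    rcases h Z hqb with ⟨g, hgA, hgZ⟩
    exact ⟨g, hbt hgZ, hgA⟩

/-- `βP` : ultrafilters containing `P`. -/
def UT (P : Set M) : Set (Ultrafilter M) := {u | P ∈ u}

lemma UT_mul {P : Set M} (hP : ∀ a ∈ P, ∀ b ∈ P, a * b ∈ P) {u v : Ultrafilter M}
    (hu : u ∈ UT P) (hv : v ∈ UT P) : u * v ∈ UT P := by
  rw [UT, Set.mem_setOf_eq, mem_umul]
  exact Filter.mem_of_superset hu fun m hm =>
    Filter.mem_of_superset hv fun m' hm' => hP m hm m' hm'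

lemma pure_mem_UT {P : Set M} {x : M} (hx : x ∈ P) : (pure x : Ultrafilter M) ∈ UT P := by
  simpa [UT] using hx

lemma mem_cl_pures {P : Set M} {u : Ultrafilter M} (hu : P ∈ u) :
    u ∈ closure ((pure : M → Ultrafilter M) '' P) := by
  rw [mem_closure_ultra]
  intro Z hZ
  rcases Ultrafilter.nonempty_of_mem (Filter.inter_mem hZ hu) with ⟨x, hxZ, hxP⟩
  exact ⟨pure x, ⟨x, hxP, rfl⟩, by simpa using hxZ⟩

lemma umul_mem_closure {P : Set M} {A : Set (Ultrafilter M)}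
    (hA : ∀ x ∈ P, ∀ a ∈ A, (pure x : Ultrafilter M) * a ∈ closure A)
    {u b : Ultrafilter M} (hu : u ∈ UT P) (hb : b ∈ closure A) : u * b ∈ closure A := by
  have h1 : ∀ x ∈ P, (pure x : Ultrafilter M) * b ∈ closure A := by
    intro x hx
    rw [pure_umul_eq_map]
    have hmem : Ultrafilter.map (fun y => x * y) b
        ∈ closure (Ultrafilter.map (fun y => x * y) '' A) :=
      mem_closure_image (continuous_umap _).continuousAt hb
    refine closure_minimal ?_ isClosed_closure hmem
    rintro _ ⟨a, haA, rfl⟩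
    rw [← pure_umul_eq_map]
    exact hA x hx a haA
  have h2 : u ∈ closure ((pure : M → Ultrafilter M) '' P) := mem_cl_pures hu
  have h3 : (fun w => w * b) u ∈ closure ((fun w => w * b) '' ((pure : M → Ultrafilter M) '' P)) :=
    mem_closure_image (Ultrafilter.continuous_mul_left b).continuousAt h2
  refine closure_minimal ?_ isClosed_closure h3
  rintro _ ⟨_, ⟨x, hxP, rfl⟩, rfl⟩
  exact h1 x hxP

/-- Nonempty closed left ideal of `βP`. -/
def IsCLI (P : Set M) (L : Set (Ultrafilter M)) : Prop :=
  L.Nonempty ∧ IsClosed L ∧ L ⊆ UT P ∧ ∀ u ∈ UT P, ∀ g ∈ L, u * g ∈ L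

lemma exists_minimal_CLI (P : Set M) (hP : ∀ a ∈ P, ∀ b ∈ P, a * b ∈ P)
    {J : Set (Ultrafilter M)} (hJ : IsCLI P J) :
    ∃ L, IsCLI P L ∧ L ⊆ J ∧
      ∀ g ∈ L, closure ({w | ∃ u ∈ UT P, w = u * g} ∪ {g}) = L := by
  obtain ⟨L, hLJ, hLmin⟩ := zorn_superset_nonempty {L | IsCLI P L ∧ L ⊆ J}
    (fun c hcS hchain hcne => by
      refine ⟨⋂₀ c, ⟨⟨?_, ?_, ?_, ?_⟩, ?_⟩, fun s hs => Set.sInter_subset_of_mem hs⟩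
      · -- nonempty by compactness
        haveI : Nonempty c := hcne.to_subtype
        refine IsCompact.nonempty_sInter_of_directed_nonempty_isCompact_isClosed ?_
          (fun U hU => (hcS hU).1.1) (fun U hU => (hcS hU).1.2.1.isCompact)
          (fun U hU => (hcS hU).1.2.1)
        intro a ha b hb
        rcases hchain.total ha hb with h | h
        · exact ⟨a, ha, subset_rfl, h⟩
        · exact ⟨b, hb, h, subset_rfl⟩
      · exact isClosed_sInter fun U hU => (hcS hU).1.2.1
      · rcases hcne with ⟨U, hU⟩
        exact (Set.sInter_subset_of_mem hU).trans (hcS hU).1.2.2.1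
      · intro u hu g hg
        exact Set.mem_sInter.mpr fun U hU =>
          (hcS hU).1.2.2.2 u hu g (Set.mem_sInter.mp hg U hU)
      · rcases hcne with ⟨U, hU⟩
        exact (Set.sInter_subset_of_mem hU).trans (hcS hU).2)
    J ⟨hJ, subset_rfl⟩
  obtain ⟨hLCLI, hLsubJ⟩ := hLmin.prop
  refine ⟨L, hLCLI, hLsubJ, fun g hg => ?_⟩
  set A : Set (Ultrafilter M) := {w | ∃ u ∈ UT P, w = u * g} ∪ {g} with hA
  have hAsub : A ⊆ L := by
    rintro w (⟨u, hu, rfl⟩ | rfl)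
    · exact hLCLI.2.2.2 u hu g hg
    · exact hg
  have hclsub : closure A ⊆ L := closure_minimal hAsub hLCLI.2.1
  have hmemA : ∀ x ∈ P, ∀ a ∈ A, (pure x : Ultrafilter M) * a ∈ closure A := by
    intro x hx a ha
    apply subset_closure
    rcases ha with ⟨u, hu, rfl⟩ | rfl
    · exact Or.inl ⟨(pure x : Ultrafilter M) * u,
        UT_mul hP (pure_mem_UT hx) hu, (mul_assoc _ _ _).symm⟩
    · exact Or.inl ⟨pure x, pure_mem_UT hx, rfl⟩
  have hCLI' : IsCLI P (closure A) ∧ closure A ⊆ J := by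
    refine ⟨⟨⟨g, subset_closure (Or.inr rfl)⟩, isClosed_closure,
      hclsub.trans hLCLI.2.2.1, fun u hu b hb => umul_mem_closure hmemA hu hb⟩,
      hclsub.trans hLsubJ⟩
  exact subset_antisymm hclsub (hLmin.2 hCLI' hclsub)

-- helper: ultrafilter containing a family with the finite intersection property
lemma exists_ultra_of_fip {X : Type*} {ι : Type*} (f : ι → Set X)
    (h : ∀ T : Finset ι, (⋂ i ∈ T, f i).Nonempty) :
    ∃ u : Ultrafilter X, ∀ i, f i ∈ u := by
  classical
  set g : Finset ι → Filter X := fun T => Filter.principal (⋂ i ∈ T, f i) with hg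
  have hdir : Directed (· ≥ ·) g := by
    intro T T'
    refine ⟨T ∪ T', Filter.principal_mono.mpr ?_, Filter.principal_mono.mpr ?_⟩
    · exact Set.biInter_subset_biInter_left (fun i hi => Finset.mem_union_left _ hi)
    · exact Set.biInter_subset_biInter_left (fun i hi => Finset.mem_union_right _ hi)
  haveI hne : Filter.NeBot (⨅ T, g T) :=
    Filter.iInf_neBot_of_directed' hdir fun T => Filter.principal_neBot_iff.mpr (h T)
  obtain ⟨u, hu⟩ := Ultrafilter.exists_le (⨅ T, g T)
  refine ⟨u, fun i => ?_⟩
  have h1 : f i ∈ g {i} := by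
    rw [hg, Filter.mem_principal]
    intro x hx
    simpa using Set.mem_iInter₂.mp hx i (Finset.mem_singleton_self i)
  exact hu (le_trans (iInf_le g {i}) (le_refl _) h1)

lemma umap_mul (f : M → M) (hf : ∀ x y : M, f (x * y) = f x * f y) (U V : Ultrafilter M) :
    Ultrafilter.map f (U * V) = Ultrafilter.map f U * Ultrafilter.map f V := by
  ext s
  rw [Ultrafilter.mem_map, mem_umul, mem_umul]
  have hset : (f ⁻¹' {m | {m' | m * m' ∈ s} ∈ Ultrafilter.map f V})
      = {m | {m' | m * m' ∈ f ⁻¹' s} ∈ V} := by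
    ext m
    simp only [Set.mem_preimage, Set.mem_setOf_eq, Ultrafilter.mem_map]
    have : (f ⁻¹' {m' | f m * m' ∈ s}) = {m' | m * m' ∈ f ⁻¹' s} := by
      ext m'; simp [hf]
    rw [this]
    exact Iff.rfl
  rw [show {m | {m' | m * m' ∈ s} ∈ Ultrafilter.map f V} ∈ Ultrafilter.map f U
      ↔ (f ⁻¹' {m | {m' | m * m' ∈ s} ∈ Ultrafilter.map f V}) ∈ U from Ultrafilter.mem_map,
    hset]

lemma umap_eq_self (f : M → M) {P : Set M} (hid : ∀ x ∈ P, f x = x)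
    {u : Ultrafilter M} (hu : P ∈ u) : Ultrafilter.map f u = u := by
  ext s
  rw [Ultrafilter.mem_map]
  constructor
  · intro h
    refine Filter.mem_of_superset (Filter.inter_mem h hu) ?_
    rintro x ⟨hx1, hx2⟩
    rw [← hid x hx2]; exact hx1
  · intro h
    refine Filter.mem_of_superset (Filter.inter_mem h hu) ?_
    rintro x ⟨hx1, hx2⟩
    simp only [Set.mem_preimage, hid x hx2]; exact hx1

lemma exists_mem_of_biUnion_mem {X Y : Type*} {u : Ultrafilter X} {F : Finset Y} {g : Y → Set X}
    (h : (⋃ t ∈ F, g t) ∈ u) : ∃ t ∈ F, g t ∈ u := by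
  classical
  induction F using Finset.induction with
  | empty => simp only [Finset.notMem_empty, Set.iUnion_of_empty, Set.iUnion_empty] at h
             exact absurd h (Ultrafilter.empty_notMem)
  | @insert a s ha ih =>
      rw [Finset.set_biUnion_insert] at h
      rcases Ultrafilter.union_mem_iff.mp h with h | h
      · exact ⟨a, Finset.mem_insert_self a s, h⟩
      · rcases ih h with ⟨t, ht, htu⟩
        exact ⟨t, Finset.mem_insert_of_mem ht, htu⟩

/-- In a minimal closed left ideal `L`, every element is absorbed on the right
by any idempotent of `L`. -/
lemma right_absorb {P : Set M} {L : Set (Ultrafilter M)}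
    (hmin : ∀ g ∈ L, closure ({w | ∃ u ∈ UT P, w = u * g} ∪ {g}) = L)
    {e : Ultrafilter M} (he : e ∈ L) (hee : e * e = e) :
    ∀ f ∈ L, f * e = f := by
  intro f hf
  have hW : IsClosed {g : Ultrafilter M | g * e = g} :=
    isClosed_eq (Ultrafilter.continuous_mul_left e) continuous_id
  have hsub : ({w | ∃ u ∈ UT P, w = u * e} ∪ {e}) ⊆ {g : Ultrafilter M | g * e = g} := by
    rintro w (⟨u, hu, rfl⟩ | rfl)
    · show u * e * e = u * e
      rw [mul_assoc, hee]
    · exact hee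
  have := closure_minimal hsub hW
  rw [hmin e he] at this
  exact this hf

/-- Key lemma: if `q` lies in a minimal closed left ideal of `βP`, then every member
of `q` is "syndetic along `P`" in the appropriate sense. -/
lemma syndetic_of_minimal {P : Set M} (hP : ∀ a ∈ P, ∀ b ∈ P, a * b ∈ P) (hPne : P.Nonempty)
    {L : Set (Ultrafilter M)} (hL : IsCLI P L)
    (hmin : ∀ g ∈ L, closure ({w | ∃ u ∈ UT P, w = u * g} ∪ {g}) = L)
    {q : Ultrafilter M} (hq : q ∈ L) {Z : Set M} (hZ : Z ∈ q) :
    ∃ F : Finset M, ↑F ⊆ P ∧ ∀ z ∈ P, ∃ t ∈ F, {y | t * (z * y) ∈ Z} ∈ q := by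
  by_contra hcon
  push_neg at hcon
  classical
  -- build an ultrafilter r' concentrating on counterexamples
  set f : M → Set M := fun t => {z | z ∈ P ∧ (t ∈ P → {y | t * (z * y) ∈ Z} ∉ q)} with hfdef
  have hfip : ∀ T : Finset M, (⋂ t ∈ T, f t).Nonempty := by
    intro T
    obtain ⟨z, hzP, hz⟩ := hcon (T.filter (· ∈ P))
      (by intro t ht; exact (Finset.mem_filter.mp ht).2)
    refine ⟨z, Set.mem_iInter₂.mpr fun t ht => ⟨hzP, fun htP => ?_⟩⟩
    exact hz t (Finset.mem_filter.mpr ⟨ht, htP⟩)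
  obtain ⟨r, hr⟩ := exists_ultra_of_fip f hfip
  have hrP : P ∈ r := by
    obtain ⟨t0, _⟩ := hPne
    exact Filter.mem_of_superset (hr t0) fun z hz => hz.1
  have hqP : P ∈ q := hL.2.2.1 hq
  -- s := q * r * q lies in L
  have hrUT : r ∈ UT P := hrP
  have hqUT : q ∈ UT P := hqP
  have hs : q * r * q ∈ L := hL.2.2.2 (q * r) (UT_mul hP hqUT hrUT) q hq
  have hqcl : q ∈ closure ({w | ∃ u ∈ UT P, w = u * (q * r * q)} ∪ {q * r * q}) := by
    rw [hmin _ hs]; exact hq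
  rcases mem_closure_ultra.mp hqcl Z hZ with ⟨g, hgA, hgZ⟩
  -- a common contradiction derivation
  have key : ∀ a ∈ P, {y | a * y ∈ Z} ∈ q * r * q → False := by
    intro a haP hmem
    rw [mul_assoc, mem_umul] at hmem
    rcases Ultrafilter.nonempty_of_mem (Filter.inter_mem hmem hqP) with ⟨b, hb1, hbP⟩
    simp only [Set.mem_setOf_eq] at hb1
    rw [mem_umul] at hb1
    rcases Ultrafilter.nonempty_of_mem (Filter.inter_mem hb1 (hr (a * b))) with ⟨z, hz1, hz2⟩
    simp only [Set.mem_setOf_eq] at hz1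
    have heq : {y | z * y ∈ {m' | b * m' ∈ {y | a * y ∈ Z}}} = {y | (a * b) * (z * y) ∈ Z} := by
      ext y; simp only [Set.mem_setOf_eq, mul_assoc]
    exact hz2.2 (hP a haP b hbP) (heq ▸ hz1)
  rcases hgA with ⟨u, huUT, rfl⟩ | rfl
  · rw [mem_umul] at hgZ
    have := Ultrafilter.nonempty_of_mem (Filter.inter_mem hgZ huUT)
    rcases this with ⟨a, ha1, haP⟩
    exact key a haP ha1
  · -- Z ∈ q * r * q directly
    rw [mul_assoc, mem_umul] at hgZ
    rcases Ultrafilter.nonempty_of_mem (Filter.inter_mem hgZ hqP) with ⟨a, ha1, haP⟩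
    simp only [Set.mem_setOf_eq] at ha1
    rw [mem_umul] at ha1
    rcases Ultrafilter.nonempty_of_mem (Filter.inter_mem ha1 (hr a)) with ⟨z, hz1, hz2⟩
    simp only [Set.mem_setOf_eq] at hz1
    have heq : {y | z * y ∈ {m' | a * m' ∈ Z}} = {y | a * (z * y) ∈ Z} := by
      ext y; simp only [Set.mem_setOf_eq, mul_assoc]
    exact hz2.2 haP (heq ▸ hz1)

/-- Members of an ultrafilter lying in a minimal closed left ideal of `βP` are
piecewise syndetic in `P`. -/
lemma isPWSIn_of_minimal {N : Type*} [Monoid N] {P : Set N}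
    (hP : ∀ a ∈ P, ∀ b ∈ P, a * b ∈ P) (hPne : P.Nonempty)
    {L : Set (Ultrafilter N)} (hL : IsCLI P L)
    (hmin : ∀ g ∈ L, closure ({w | ∃ u ∈ UT P, w = u * g} ∪ {g}) = L)
    {q : Ultrafilter N} (hq : q ∈ L) {Z : Set N} (hZ : Z ∈ q) :
    IsPWSIn P Z := by
  obtain ⟨F, hFP, hF⟩ := syndetic_of_minimal hP hPne hL hmin hq hZ
  refine ⟨F, hFP, fun E hE => ?_⟩
  have hqP : P ∈ q := hL.2.2.1 hq
  have hGmem : (P ∩ ⋂ e ∈ E, ⋃ t ∈ F, {y | t * (e * y) ∈ Z}) ∈ q := by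
    refine Filter.inter_mem hqP ((Filter.biInter_finset_mem E).mpr fun e he => ?_)
    obtain ⟨t, htF, ht⟩ := hF e (hE he)
    exact Filter.mem_of_superset ht fun y hy => Set.mem_biUnion htF hy
  obtain ⟨x, hxP, hx⟩ := Ultrafilter.nonempty_of_mem hGmem
  refine ⟨x, hxP, fun e he => ?_⟩
  have := Set.mem_iInter₂.mp hx e he
  rcases Set.mem_iUnion₂.mp this with ⟨t, htF, ht⟩
  exact ⟨t, htF, ht⟩

end Machinery

section Words

variable {𝒜 : ℕ → Set α} {n m : ℕ}

lemma mem_bigA {k : ℕ} {a : α} (ha : a ∈ 𝒜 k) : a ∈ bigA 𝒜 := Set.mem_iUnion.mpr ⟨k, ha⟩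

lemma S0_mul_mem {a b : FreeMonoid (α ⊕ Fin n)} (ha : a ∈ S0 𝒜 n) (hb : b ∈ S0 𝒜 n) :
    a * b ∈ S0 𝒜 n := by
  refine ⟨?_, ?_⟩
  · rw [FreeMonoid.toList_mul]
    simp [ha.1]
  · rw [FreeMonoid.toList_mul]
    intro x hx
    rcases List.mem_append.mp hx with h | h
    exacts [ha.2 x h, hb.2 x h]

lemma S0_letters {w : FreeMonoid (α ⊕ Fin n)} (hw : w ∈ S0 𝒜 n) :
    ∀ x ∈ FreeMonoid.toList w, ∀ a : α, x = Sum.inl a → a ∈ bigA 𝒜 := by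
  intro x hx a hxa
  rcases hw.2 x hx with ⟨a', ha', he⟩
  rw [hxa] at he
  obtain rfl : a = a' := Sum.inl.inj he
  exact ha'

lemma S_letters {w : FreeMonoid (α ⊕ Fin n)} (hw : w ∈ SV 𝒜 n ∪ S0 𝒜 n) :
    ∀ x ∈ FreeMonoid.toList w, ∀ a : α, x = Sum.inl a → a ∈ bigA 𝒜 := by
  rcases hw with hw | hw
  · exact hw.1
  · exact S0_letters hw

lemma mem_SV_mul {a b : FreeMonoid (α ⊕ Fin n)} (ha : a ∈ SV 𝒜 n ∪ S0 𝒜 n)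
    (hb : b ∈ SV 𝒜 n ∪ S0 𝒜 n) (h : a ∈ SV 𝒜 n ∨ b ∈ SV 𝒜 n) : a * b ∈ SV 𝒜 n := by
  constructor
  · rw [FreeMonoid.toList_mul]
    intro x hx c hxc
    rcases List.mem_append.mp hx with h' | h'
    exacts [S_letters ha x h' c hxc, S_letters hb x h' c hxc]
  · intro i
    rw [FreeMonoid.toList_mul]
    rcases h with h | h
    · exact List.mem_append.mpr (Or.inl (h.2 i))
    · exact List.mem_append.mpr (Or.inr (h.2 i))

lemma mem_S_mul {a b : FreeMonoid (α ⊕ Fin n)} (ha : a ∈ SV 𝒜 n ∪ S0 𝒜 n)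
    (hb : b ∈ SV 𝒜 n ∪ S0 𝒜 n) : a * b ∈ SV 𝒜 n ∪ S0 𝒜 n := by
  rcases ha with ha' | ha'
  · exact Or.inl (mem_SV_mul (Or.inl ha') hb (Or.inl ha'))
  · rcases hb with hb' | hb'
    · exact Or.inl (mem_SV_mul (Or.inr ha') (Or.inl hb') (Or.inr hb'))
    · exact Or.inr (S0_mul_mem ha' hb')

lemma subst_mul (w₁ w₂ : FreeMonoid (α ⊕ Fin n)) (x : Fin n → α) :
    subst (w₁ * w₂) x = subst w₁ x * subst w₂ x :=
  map_mul (FreeMonoid.map _) w₁ w₂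

lemma subst_eq_self {w : FreeMonoid (α ⊕ Fin n)}
    (hw : ∀ y ∈ FreeMonoid.toList w, ∃ a : α, y = Sum.inl a) (x : Fin n → α) :
    subst w x = w := by
  have h : FreeMonoid.toList (subst w x) = FreeMonoid.toList w := by
    rw [subst, FreeMonoid.toList_map]
    rw [show (FreeMonoid.toList w).map (Sum.elim Sum.inl fun i => Sum.inl (x i))
        = (FreeMonoid.toList w).map id from List.map_congr_left ?_, List.map_id]
    intro y hy
    rcases hw y hy with ⟨a, rfl⟩
    rfl
  exact FreeMonoid.toList.injective h

lemma subst_S0 {w : FreeMonoid (α ⊕ Fin n)} (hw : w ∈ S0 𝒜 n) (x : Fin n → α) :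
    subst w x = w :=
  subst_eq_self (fun y hy => (hw.2 y hy).imp fun a ha => ha.2) x

lemma subst_mem_S0 (hn : 1 ≤ n) {w : FreeMonoid (α ⊕ Fin n)} {x : Fin n → α}
    (hw : w ∈ SV 𝒜 n ∪ S0 𝒜 n) (hx : x ∈ tuples 𝒜 m n) : subst w x ∈ S0 𝒜 n := by
  rcases hw with hw | hw
  · constructor
    · rw [subst, FreeMonoid.toList_map]
      have : FreeMonoid.toList w ≠ [] := List.ne_nil_of_mem (hw.2 ⟨0, hn⟩)
      simpa using this
    · rw [subst, FreeMonoid.toList_map]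
      intro y hy
      rcases List.mem_map.mp hy with ⟨z, hz, rfl⟩
      cases z with
      | inl a => exact ⟨a, hw.1 _ hz a rfl, rfl⟩
      | inr i => exact ⟨x i, mem_bigA (hx i), rfl⟩
  · rw [subst_S0 hw]
    exact hw

lemma prod_mem_S0 {b : FreeMonoid (α ⊕ Fin n)} (hb : b ∈ S0 𝒜 n)
    (L : List (FreeMonoid (α ⊕ Fin n))) (hL : ∀ u ∈ L, u ∈ S0 𝒜 n) :
    b * L.prod ∈ S0 𝒜 n := by
  induction L generalizing b with
  | nil => simpa using hb
  | cons u L ih =>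
      rw [List.prod_cons, ← mul_assoc]
      exact ih (S0_mul_mem hb (hL u List.mem_cons_self))
        (fun v hv => hL v (List.mem_cons_of_mem u hv))

/-- Letters of a word are all in the alphabet. -/
def LOK (𝒜 : ℕ → Set α) {n : ℕ} (w : FreeMonoid (α ⊕ Fin n)) : Prop :=
  ∀ y ∈ FreeMonoid.toList w, ∀ a : α, y = Sum.inl a → a ∈ bigA 𝒜

lemma LOK_mul {a b : FreeMonoid (α ⊕ Fin n)} (ha : LOK 𝒜 a) (hb : LOK 𝒜 b) :
    LOK 𝒜 (a * b) := by
  intro y hy c hyc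
  rw [FreeMonoid.toList_mul] at hy
  rcases List.mem_append.mp hy with h | h
  exacts [ha y h c hyc, hb y h c hyc]

lemma LOK_prod (L : List (FreeMonoid (α ⊕ Fin n))) (hL : ∀ u ∈ L, LOK 𝒜 u) :
    LOK 𝒜 L.prod := by
  induction L with
  | nil => intro y hy; simp [FreeMonoid.toList_one] at hy
  | cons u L ih =>
      rw [List.prod_cons]
      exact LOK_mul (hL u List.mem_cons_self)
        (ih fun v hv => hL v (List.mem_cons_of_mem u hv))

/-- constant block: the word `c 0 c 1 ⋯ c (n-1)`. -/
def gblk {n : ℕ} (c : Fin n → α) : FreeMonoid (α ⊕ Fin n) :=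
  FreeMonoid.ofList (List.ofFn fun j : Fin n => (Sum.inl (c j) : α ⊕ Fin n))

/-- variable block: the word `v₁ v₂ ⋯ vₙ`. -/
def vblk (α : Type*) (n : ℕ) : FreeMonoid (α ⊕ Fin n) :=
  FreeMonoid.ofList (List.ofFn fun j : Fin n => (Sum.inr j : α ⊕ Fin n))

lemma toList_gblk (c : Fin n → α) :
    FreeMonoid.toList (gblk c) = List.ofFn (fun j : Fin n => (Sum.inl (c j) : α ⊕ Fin n)) := rfl

lemma toList_vblk :
    FreeMonoid.toList (vblk α n) = List.ofFn (fun j : Fin n => (Sum.inr j : α ⊕ Fin n)) := rfl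

lemma gblk_mem_S0 (hn : 1 ≤ n) {c : Fin n → α} (hc : ∀ j, c j ∈ 𝒜 m) :
    gblk c ∈ S0 𝒜 n := by
  constructor
  · rw [toList_gblk]
    simp only [ne_eq, List.ofFn_eq_nil_iff]
    omega
  · intro y hy
    rw [toList_gblk] at hy
    rcases List.mem_ofFn.mp hy with ⟨j, rfl⟩
    exact ⟨c j, mem_bigA (hc j), rfl⟩

lemma LOK_gblk {c : Fin n → α} (hc : ∀ j, c j ∈ bigA 𝒜) : LOK 𝒜 (gblk c) := by
  intro y hy a hya
  rw [toList_gblk] at hy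
  rcases List.mem_ofFn.mp hy with ⟨j, rfl⟩
  obtain rfl : a = c j := Sum.inl.inj hya.symm
  exact hc j

lemma LOK_vblk : LOK 𝒜 (vblk α n) := by
  intro y hy a hya
  rw [toList_vblk] at hy
  rcases List.mem_ofFn.mp hy with ⟨j, rfl⟩
  exact absurd hya (by simp)

lemma LOK_of_S0 {w : FreeMonoid (α ⊕ Fin n)} (hw : w ∈ S0 𝒜 n) : LOK 𝒜 w :=
  S0_letters hw

lemma subst_gblk (c : Fin n → α) (x : Fin n → α) : subst (gblk c) x = gblk c := by
  apply subst_eq_self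
  intro y hy
  rw [toList_gblk] at hy
  rcases List.mem_ofFn.mp hy with ⟨j, rfl⟩
  exact ⟨c j, rfl⟩

lemma subst_vblk (x : Fin n → α) : subst (vblk α n) x = gblk x := by
  apply FreeMonoid.toList.injective
  rw [subst, FreeMonoid.toList_map]
  show (List.ofFn fun j : Fin n => (Sum.inr j : α ⊕ Fin n)).map _ = _
  rw [List.map_ofFn]
  rfl

lemma inr_mem_vblk (i : Fin n) : (Sum.inr i : α ⊕ Fin n) ∈ FreeMonoid.toList (vblk α n) := by
  rw [toList_vblk]
  exact List.mem_ofFn.mpr ⟨i, rfl⟩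

open Combinatorics in
/-- Hales–Jewett for piecewise syndetic subsets of `S₀`: every piecewise syndetic set
contains the full orbit `{w(ā) : ā ∈ Aₘⁿ}` of some `n`-variable word `w`. -/
lemma hj_for_pws (hn : 1 ≤ n) (hfin : (𝒜 m).Finite) (hne : (𝒜 m).Nonempty)
    {B : Set (FreeMonoid (α ⊕ Fin n))} (hB : IsPWSIn (S0 𝒜 n) B) :
    ∃ w ∈ SV 𝒜 n, ∀ a ∈ tuples 𝒜 m n, subst w a ∈ B := by
  classical
  obtain ⟨F₁, hF₁S, hF₁⟩ := hB
  haveI : Finite ↥(𝒜 m) := hfin.to_subtype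
  haveI : Finite {f : Fin n → α // ∀ j, f j ∈ 𝒜 m} := Finite.of_injective
    (fun c : {f : Fin n → α // ∀ j, f j ∈ 𝒜 m} => (fun j => (⟨c.1 j, c.2 j⟩ : ↥(𝒜 m))))
    (by intro c₁ c₂ h
        apply Subtype.ext; funext j
        exact congrArg Subtype.val (congrFun h j))
  obtain ⟨ι, ιfin, hHJ⟩ :=
    Line.exists_mono_in_high_dimension {f : Fin n → α // ∀ j, f j ∈ 𝒜 m} {t // t ∈ F₁}
  haveI := ιfin
  obtain ⟨a0v, ha0⟩ := hne
  set CT := {f : Fin n → α // ∀ j, f j ∈ 𝒜 m}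
  let a₀ : CT := ⟨fun _ => a0v, fun _ => ha0⟩
  have hgS0 : ∀ c : CT, gblk c.1 ∈ S0 𝒜 n := fun c => gblk_mem_S0 hn c.2
  set ord : List ι := (Finset.univ : Finset ι).toList with hord
  set Pword : (ι → CT) → FreeMonoid (α ⊕ Fin n) :=
    fun v => gblk a₀.1 * (ord.map fun i => gblk (v i).1).prod with hPword
  have hPS0 : ∀ v, Pword v ∈ S0 𝒜 n := by
    intro v
    refine prod_mem_S0 (hgS0 a₀) _ ?_
    rintro u hu
    rcases List.mem_map.mp hu with ⟨i, _, rfl⟩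
    exact hgS0 _
  haveI := Fintype.ofFinite CT
  obtain ⟨x, hxS0, hx⟩ := hF₁ (Finset.image Pword Finset.univ)
    (by rintro w hw
        rcases Finset.mem_image.mp hw with ⟨v, _, rfl⟩
        exact hPS0 v)
  have hch : ∀ v : ι → CT, ∃ t : {t // t ∈ F₁}, t.1 * (Pword v * x) ∈ B := by
    intro v
    obtain ⟨t, htF, htB⟩ := hx (Pword v) (Finset.mem_image.mpr ⟨v, Finset.mem_univ v, rfl⟩)
    exact ⟨⟨t, htF⟩, htB⟩
  choose tf htf using hch
  obtain ⟨l, t₀, ht₀⟩ := hHJ tf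
  set blk : Option CT → FreeMonoid (α ⊕ Fin n) :=
    fun o => o.elim (vblk α n) (fun c => gblk c.1) with hblk
  set mid : FreeMonoid (α ⊕ Fin n) := (ord.map fun i => blk (l.idxFun i)).prod with hmid
  have ht₀S0 : t₀.1 ∈ S0 𝒜 n := hF₁S t₀.2
  refine ⟨t₀.1 * (gblk a₀.1 * (mid * x)), ⟨?_, ?_⟩, ?_⟩
  · -- letters
    refine LOK_mul (LOK_of_S0 ht₀S0) (LOK_mul (LOK_gblk fun j => mem_bigA ha0)
      (LOK_mul ?_ (LOK_of_S0 hxS0)))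
    refine LOK_prod _ ?_
    rintro u hu
    rcases List.mem_map.mp hu with ⟨i, _, rfl⟩
    cases h : l.idxFun i with
    | none => rw [hblk]; simpa [h] using (LOK_vblk (𝒜 := 𝒜))
    | some c =>
        rw [hblk]
        simpa [h] using LOK_gblk (𝒜 := 𝒜) (fun j => mem_bigA (c.2 j))
  · -- all variables occur
    intro i
    obtain ⟨i₀, hi₀⟩ := l.proper
    rw [FreeMonoid.toList_mul, FreeMonoid.toList_mul, FreeMonoid.toList_mul]
    refine List.mem_append.mpr (Or.inr (List.mem_append.mpr (Or.inr
      (List.mem_append.mpr (Or.inl ?_)))))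
    rw [hmid, FreeMonoid.toList_prod]
    refine List.mem_flatten.mpr ⟨FreeMonoid.toList (vblk α n), ?_, inr_mem_vblk i⟩
    refine List.mem_map.mpr ⟨blk (l.idxFun i₀), ?_, by rw [hi₀]; rfl⟩
    exact List.mem_map.mpr ⟨i₀, Finset.mem_toList.mpr (Finset.mem_univ i₀), rfl⟩
  · -- substitution instances lie in B
    intro a ha
    have key : subst (t₀.1 * (gblk a₀.1 * (mid * x))) a
        = t₀.1 * (Pword (l ⟨a, ha⟩) * x) := by
      rw [subst_mul, subst_mul, subst_mul, subst_S0 ht₀S0, subst_gblk, subst_S0 hxS0]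
      have hmids : subst mid a = (ord.map fun i => gblk ((l ⟨a, ha⟩) i).1).prod := by
        rw [hmid]
        show (FreeMonoid.map _) _ = _
        rw [MonoidHom.map_list_prod, List.map_map]
        congr 1
        apply List.map_congr_left
        intro i _
        show subst (blk (l.idxFun i)) a = gblk ((l ⟨a, ha⟩) i).1
        rw [Line.coe_apply]
        cases h : l.idxFun i with
        | none => rw [hblk]; simp only [Option.elim, Option.getD]; exact subst_vblk a
        | some c => rw [hblk]; simp only [Option.elim, Option.getD]; exact subst_gblk c.1 a
      rw [hmids, hPword]
      rw [mul_assoc]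
    rw [key]
    have := htf (l ⟨a, ha⟩)
    rwa [ht₀ ⟨a, ha⟩] at this

end Words


theorem statement12 (𝒜 : ℕ → Set α) (hmono : Monotone 𝒜)
    (hfin : ∀ i, (𝒜 i).Finite) (hne : ∀ i, (𝒜 i).Nonempty)
    (m n : ℕ) (hn : 1 ≤ n)
    (D : Set (FreeMonoid (α ⊕ Fin n))) (hD : D ⊆ S0 𝒜 n)
    (hpws : IsPWSIn (S0 𝒜 n) D) :
    IsPWSIn (SV 𝒜 n ∪ S0 𝒜 n)
      ((SV 𝒜 n ∪ S0 𝒜 n) ∩ ⋂ a ∈ tuples 𝒜 m n, (fun w => subst w a) ⁻¹' D) ∧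
    IsPWSIn (SV 𝒜 n ∪ S0 𝒜 n)
      (SV 𝒜 n ∩ ⋂ a ∈ tuples 𝒜 m n, (fun w => subst w a) ⁻¹' D) := by
  classical
  set S0' : Set (FreeMonoid (α ⊕ Fin n)) := S0 𝒜 n with hS0'
  set SV' : Set (FreeMonoid (α ⊕ Fin n)) := SV 𝒜 n with hSV'
  have hS0mul : ∀ a ∈ S0', ∀ b ∈ S0', a * b ∈ S0' := fun a ha b hb => S0_mul_mem ha hb
  have hSmul : ∀ a ∈ SV' ∪ S0', ∀ b ∈ SV' ∪ S0', a * b ∈ SV' ∪ S0' :=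
    fun a ha b hb => mem_S_mul ha hb
  have hS0ne : S0'.Nonempty := by
    obtain ⟨a0, ha0⟩ := hne 0
    have hmem : FreeMonoid.of (Sum.inl a0 : α ⊕ Fin n) ∈ S0 𝒜 n := by
      constructor
      · rw [FreeMonoid.toList_of]; simp
      · intro y hy
        rw [FreeMonoid.toList_of] at hy
        rcases List.mem_singleton.mp hy with rfl
        exact ⟨a0, mem_bigA ha0, rfl⟩
    exact ⟨_, hmem⟩
  obtain ⟨F, hFS0, hFpws⟩ := hpws
  -- Step 1: an ultrafilter concentrating on the "thickness witnesses".
  set Aset : FreeMonoid (α ⊕ Fin n) → Set (FreeMonoid (α ⊕ Fin n)) :=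
    fun w => {y | y ∈ S0' ∧ ∃ t ∈ F, t * (w * y) ∈ D} with hAset
  have hfip : ∀ T : Finset (FreeMonoid (α ⊕ Fin n)),
      (⋂ w ∈ T, (if w ∈ S0' then Aset w else S0')).Nonempty := by
    intro T
    obtain ⟨y, hyS0, hy⟩ := hFpws (T.filter (· ∈ S0'))
      (fun w hw => (Finset.mem_filter.mp hw).2)
    refine ⟨y, Set.mem_iInter₂.mpr fun w hw => ?_⟩
    by_cases hwS : w ∈ S0'
    · rw [if_pos hwS]
      exact ⟨hyS0, hy w (Finset.mem_filter.mpr ⟨hw, hwS⟩)⟩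
    · rw [if_neg hwS]; exact hyS0
  obtain ⟨r, hr⟩ := exists_ultra_of_fip _ hfip
  have hrA : ∀ w ∈ S0', Aset w ∈ r := by
    intro w hw; have := hr w; rwa [if_pos hw] at this
  have hrS0 : S0' ∈ r := by
    obtain ⟨w0, hw0⟩ := hS0ne
    have := hr w0; rw [if_pos hw0] at this
    exact Filter.mem_of_superset this fun y hy => hy.1
  -- Step 2: minimal closed left ideal L₀ of βS₀ inside J.
  set J : Set (Ultrafilter (FreeMonoid (α ⊕ Fin n))) :=
    {u | S0' ∈ u ∧ ∀ w ∈ S0', Aset w ∈ u} with hJ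
  have hJCLI : IsCLI S0' J := by
    refine ⟨⟨r, hrS0, hrA⟩, ?_, fun u hu => hu.1, ?_⟩
    · have hJeq : J = {u : Ultrafilter (FreeMonoid (α ⊕ Fin n)) | S0' ∈ u} ∩
          ⋂ w ∈ S0', {u : Ultrafilter (FreeMonoid (α ⊕ Fin n)) | Aset w ∈ u} := by
        ext u
        simp only [hJ, Set.mem_setOf_eq, Set.mem_inter_iff, Set.mem_iInter₂]
      rw [hJeq]
      exact (ultrafilter_isClosed_basic _).inter
        (isClosed_biInter fun w _ => ultrafilter_isClosed_basic _)
    · rintro u hu g ⟨hg1, hg2⟩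
      constructor
      · rw [mem_umul]
        exact Filter.mem_of_superset hu fun y hy =>
          Filter.mem_of_superset hg1 fun z hz => hS0mul y hy z hz
      · intro w hw
        rw [mem_umul]
        refine Filter.mem_of_superset hu fun y hy => ?_
        refine Filter.mem_of_superset (hg2 (w * y) (hS0mul w hw y hy)) ?_
        rintro z ⟨hz1, t, htF, htD⟩
        refine ⟨hS0mul y hy z hz1, t, htF, ?_⟩
        rwa [mul_assoc] at htD
  obtain ⟨L₀, hL₀CLI, hL₀J, hL₀min⟩ := exists_minimal_CLI S0' hS0mul hJCLI
  obtain ⟨p', hp'⟩ := hL₀CLI.1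
  obtain ⟨w₀, hw₀⟩ := id hS0ne
  set p : Ultrafilter (FreeMonoid (α ⊕ Fin n)) := (pure w₀) * p' with hp
  have hpL₀ : p ∈ L₀ := hL₀CLI.2.2.2 (pure w₀) (pure_mem_UT hw₀) p' hp'
  have hpS0 : S0' ∈ p := (hL₀J hpL₀).1
  -- Step 3: pick t₀ ∈ F with t₀⁻¹D ∈ p.
  have hT' : {y | y ∈ S0' ∧ ∃ t ∈ F, t * y ∈ D} ∈ p := by
    rw [hp, mem_pure_umul]
    have hA0 : Aset w₀ ∈ p' := (hL₀J hp').2 w₀ hw₀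
    refine Filter.mem_of_superset hA0 ?_
    rintro y ⟨hy1, t, ht1, ht2⟩
    exact ⟨hS0mul w₀ hw₀ y hy1, t, ht1, ht2⟩
  have hT'sub : {y | y ∈ S0' ∧ ∃ t ∈ F, t * y ∈ D}
      ⊆ ⋃ t ∈ F, {y | t * y ∈ D} := by
    rintro y ⟨_, t, ht1, ht2⟩; exact Set.mem_biUnion ht1 ht2
  obtain ⟨t₀, ht₀F, hB₀⟩ := exists_mem_of_biUnion_mem (Filter.mem_of_superset hT' hT'sub)
  have ht₀S0 : t₀ ∈ S0' := hFS0 ht₀F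
  -- Step 4: every member of p is piecewise syndetic in S₀.
  have hmemPWS : ∀ Bs ∈ p, IsPWSIn S0' Bs := fun Bs hBs =>
    isPWSIn_of_minimal hS0mul hS0ne hL₀CLI (fun g hg => hL₀min g hg) hpL₀ hBs
  have htupfin : (tuples 𝒜 m n).Finite := by
    have htup : tuples 𝒜 m n = Set.pi Set.univ (fun _ : Fin n => 𝒜 m) := by
      ext a; simp [tuples, Set.mem_pi]
    rw [htup]; exact Set.Finite.pi fun _ => hfin m
  -- Step 5: an ultrafilter q₀ with Sᵥ ∈ q₀ and all substitutions mapping to p.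
  have hfip2 : ∀ T : Finset (Set (FreeMonoid (α ⊕ Fin n))),
      (⋂ Bs ∈ T, (if Bs ∈ p then
        SV' ∩ ⋂ a ∈ tuples 𝒜 m n, (fun w => subst w a) ⁻¹' Bs else SV')).Nonempty := by
    intro T
    have hBstar : (⋂ Bs ∈ T.filter (fun Bs => Bs ∈ p), Bs) ∈ p :=
      (Filter.biInter_finset_mem _).mpr fun Bs hBs => (Finset.mem_filter.mp hBs).2
    obtain ⟨w, hwSV, hw⟩ := hj_for_pws hn (hfin m) (hne m) (hmemPWS _ hBstar)
    refine ⟨w, Set.mem_iInter₂.mpr fun Bs hBs => ?_⟩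
    by_cases hBp : Bs ∈ p
    · rw [if_pos hBp]
      refine ⟨hwSV, Set.mem_iInter₂.mpr fun a ha => ?_⟩
      exact Set.mem_iInter₂.mp (hw a ha) Bs (Finset.mem_filter.mpr ⟨hBs, hBp⟩)
    · rw [if_neg hBp]; exact hwSV
  obtain ⟨q₀, hq₀⟩ := exists_ultra_of_fip _ hfip2
  have hq₀SV : SV' ∈ q₀ := by
    have := hq₀ ∅
    rwa [if_neg (Ultrafilter.empty_notMem)] at this
  have hq₀pre : ∀ Bs ∈ p, ∀ a ∈ tuples 𝒜 m n, (fun w => subst w a) ⁻¹' Bs ∈ q₀ := by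
    intro Bs hBs a ha
    have := hq₀ Bs
    rw [if_pos hBs] at this
    exact Filter.mem_of_superset this fun w hw => Set.mem_iInter₂.mp hw.2 a ha
  have hmapq₀ : ∀ a ∈ tuples 𝒜 m n, Ultrafilter.map (fun w => subst w a) q₀ = p := by
    intro a ha
    ext Bs
    rw [Ultrafilter.mem_map]
    constructor
    · intro h
      by_contra hBs
      have hc : Bsᶜ ∈ p := Ultrafilter.compl_mem_iff_notMem.mpr hBs
      rcases Ultrafilter.nonempty_of_mem (Filter.inter_mem h (hq₀pre Bsᶜ hc a ha)) with
        ⟨w, hw1, hw2⟩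
      exact hw2 hw1
    · intro h; exact hq₀pre Bs h a ha
  -- Step 6: minimal closed left ideal L₁ of β(Sᵥ ∪ S₀) inside X.
  set X : Set (Ultrafilter (FreeMonoid (α ⊕ Fin n))) :=
    {u | SV' ∈ u ∧ ∀ a ∈ tuples 𝒜 m n, Ultrafilter.map (fun w => subst w a) u ∈ L₀} with hX
  have hXCLI : IsCLI (SV' ∪ S0') X := by
    refine ⟨⟨q₀, hq₀SV, fun a ha => by rw [hmapq₀ a ha]; exact hpL₀⟩, ?_, ?_, ?_⟩
    · have hXeq : X = {u : Ultrafilter (FreeMonoid (α ⊕ Fin n)) | SV' ∈ u} ∩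
          ⋂ a ∈ tuples 𝒜 m n,
            (Ultrafilter.map (fun w => subst w a)) ⁻¹' L₀ := by
        ext u
        simp only [hX, Set.mem_setOf_eq, Set.mem_inter_iff, Set.mem_iInter₂,
          Set.mem_preimage]
      rw [hXeq]
      refine (ultrafilter_isClosed_basic _).inter (isClosed_biInter fun a _ => ?_)
      exact (hL₀CLI.2.1).preimage (continuous_umap _)
    · intro u hu
      exact Filter.mem_of_superset hu.1 Set.subset_union_left
    · rintro u hu g ⟨hg1, hg2⟩
      constructor
      · rw [mem_umul]
        refine Filter.mem_of_superset hu fun y hy =>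
          Filter.mem_of_superset hg1 fun z hz => ?_
        exact mem_SV_mul hy (Or.inl hz) (Or.inr hz)
      · intro a ha
        rw [umap_mul (fun w => subst w a) (fun x y => subst_mul x y a)]
        refine hL₀CLI.2.2.2 _ ?_ _ (hg2 a ha)
        show S0' ∈ Ultrafilter.map (fun w => subst w a) u
        rw [Ultrafilter.mem_map]
        exact Filter.mem_of_superset hu fun w hw => subst_mem_S0 hn hw ha
  obtain ⟨L₁, hL₁CLI, hL₁X, hL₁min⟩ := exists_minimal_CLI (SV' ∪ S0') hSmul hXCLI
  obtain ⟨q₁, hq₁L₁, hq₁idem⟩ := exists_idempotent_in_compact_subsemigroup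
    (fun u => Ultrafilter.continuous_mul_left u) L₁ hL₁CLI.1
    (hL₁CLI.2.1.isCompact) (fun u hu v hv => hL₁CLI.2.2.2 u (hL₁CLI.2.2.1 hu) v hv)
  have habs : ∀ a ∈ tuples 𝒜 m n,
      p * (Ultrafilter.map (fun w => subst w a) q₁) = p := by
    intro a ha
    have hpaL₀ : Ultrafilter.map (fun w => subst w a) q₁ ∈ L₀ := (hL₁X hq₁L₁).2 a ha
    have hpaidem : Ultrafilter.map (fun w => subst w a) q₁ *
        Ultrafilter.map (fun w => subst w a) q₁ =
        Ultrafilter.map (fun w => subst w a) q₁ := by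
      rw [← umap_mul (fun w => subst w a) (fun x y => subst_mul x y a), hq₁idem]
    exact right_absorb (fun g hg => hL₀min g hg) hpaL₀ hpaidem p hpL₀
  set qf : Ultrafilter (FreeMonoid (α ⊕ Fin n)) := p * q₁ with hqf
  have hqfL₁ : qf ∈ L₁ := by
    refine hL₁CLI.2.2.2 p ?_ q₁ hq₁L₁
    show SV' ∪ S0' ∈ p
    exact Filter.mem_of_superset hpS0 Set.subset_union_right
  have hmapqf : ∀ a ∈ tuples 𝒜 m n, Ultrafilter.map (fun w => subst w a) qf = p := by
    intro a ha
    rw [hqf, umap_mul (fun w => subst w a) (fun x y => subst_mul x y a),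
      umap_eq_self (fun w => subst w a) (fun w hw => subst_S0 hw a) hpS0]
    exact habs a ha
  have hqfSV : SV' ∈ qf := by
    rw [hqf, mem_umul]
    refine Filter.mem_of_superset hpS0 fun y hy => ?_
    exact Filter.mem_of_superset ((hL₁X hq₁L₁).1) fun z hz =>
      mem_SV_mul (Or.inr hy) (Or.inl hz) (Or.inr hz)
  -- Step 7: the set Z.
  set Z : Set (FreeMonoid (α ⊕ Fin n)) :=
    SV' ∩ ⋂ a ∈ tuples 𝒜 m n, (fun w => subst w a) ⁻¹' {y | t₀ * y ∈ D} with hZ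
  have hZqf : Z ∈ qf := by
    refine Filter.inter_mem hqfSV ((Filter.biInter_mem htupfin).mpr fun a ha => ?_)
    have hmm : {y | t₀ * y ∈ D} ∈ Ultrafilter.map (fun w => subst w a) qf := by
      rw [hmapqf a ha]; exact hB₀
    rwa [Ultrafilter.mem_map] at hmm
  have hZpws : IsPWSIn (SV' ∪ S0') Z :=
    isPWSIn_of_minimal hSmul ⟨w₀, Or.inr hw₀⟩ hL₁CLI (fun g hg => hL₁min g hg) hqfL₁ hZqf
  -- Step 8: transfer along left multiplication by t₀.
  obtain ⟨F₂, hF₂S, hF₂⟩ := hZpws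
  have htrans : ∀ z ∈ Z, t₀ * z ∈ SV' ∧ ∀ a ∈ tuples 𝒜 m n, subst (t₀ * z) a ∈ D := by
    intro z hz
    obtain ⟨hz1, hz2⟩ := hz
    refine ⟨mem_SV_mul (Or.inr ht₀S0) (Or.inl hz1) (Or.inr hz1), fun a ha => ?_⟩
    rw [subst_mul, subst_S0 ht₀S0]
    exact Set.mem_iInter₂.mp hz2 a ha
  have main : ∀ W : Set (FreeMonoid (α ⊕ Fin n)),
      (∀ z ∈ Z, t₀ * z ∈ W) → IsPWSIn (SV 𝒜 n ∪ S0 𝒜 n) W := by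
    intro W hW
    refine ⟨F₂.image (fun t => t₀ * t), ?_, fun E hE => ?_⟩
    · intro t ht
      rcases Finset.mem_coe.mp ht with ht'
      rcases Finset.mem_image.mp ht' with ⟨t', ht'', rfl⟩
      exact mem_S_mul (Or.inr ht₀S0) (hF₂S ht'')
    · obtain ⟨y, hyS, hy⟩ := hF₂ E hE
      refine ⟨y, hyS, fun e he => ?_⟩
      obtain ⟨t, htF₂, htZ⟩ := hy e he
      refine ⟨t₀ * t, Finset.mem_image_of_mem _ htF₂, ?_⟩
      rw [mul_assoc]
      exact hW _ htZ
  constructor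
  · refine main _ fun z hz => ?_
    obtain ⟨h1, h2⟩ := htrans z hz
    exact ⟨Or.inl h1, Set.mem_iInter₂.mpr fun a ha => h2 a ha⟩
  · refine main _ fun z hz => ?_
    obtain ⟨h1, h2⟩ := htrans z hz
    exact ⟨h1, Set.mem_iInter₂.mpr fun a ha => h2 a ha⟩

end InfHJ
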